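/- The inverse of the almost-Riordan array (1,g,f) is (1, 1/(g∘f̄), f̄), where f̄ is the compositional inverse of f; i.e. (1,g,f)·(1, 1/(g∘f̄), f̄) = (1,1,x) = (1, 1/(g∘f̄), f̄)·(1,g,f). -/

import Mathlib

open PowerSeries Finset

/-!
On series with zero constant term, `comp` agrees with Mathlib's `PowerSeries.subst`, so it is
multiplicative and associative. Hence `g · (gi ∘ f) = ((g ∘ f̄) · gi) ∘ f = 1 ∘ f = 1`; together
with `gi · (g ∘ f̄) = 1` and `f̄ ∘ f = x = f ∘ f̄` this gives the last two components of both
products, and the first components are `1` since the shift of `1` vanishes.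
-/

/-- Shift: `shift h = (h - h₀)/x`, i.e. the series with coefficients `h₁, h₂, …`. -/
noncomputable def shift (h : PowerSeries ℤ) : PowerSeries ℤ :=
  PowerSeries.mk fun n => coeff (n + 1) h

/-- Composition `h ∘ f` of formal power series (intended for `f` with zero constant term,
in which case `coeff n (f ^ k) = 0` for `k > n`). -/
noncomputable def comp (h f : PowerSeries ℤ) : PowerSeries ℤ :=
  PowerSeries.mk fun n => ∑ k ∈ Finset.range (n + 1), coeff k h * coeff n (f ^ k)

/-- Action of an almost-Riordan array `(a,g,f)` on a power series `b`:
`(a,g,f)·b = b₀ a + x g b̃(f)` where `b̃ = (b - b₀)/x`. -/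
noncomputable def act (a g f b : PowerSeries ℤ) : PowerSeries ℤ :=
  C (coeff 0 b) * a + X * g * comp (shift b) f

/-- Product of almost-Riordan arrays: `(a,g,f)·(b,u,v) = ((a,g,f)·b, g·u(f), v(f))`. -/
noncomputable def arMul (t s : PowerSeries ℤ × PowerSeries ℤ × PowerSeries ℤ) :
    PowerSeries ℤ × PowerSeries ℤ × PowerSeries ℤ :=
  (act t.1 t.2.1 t.2.2 s.1, t.2.1 * comp s.2.1 t.2.2, comp s.2.2 t.2.2)

/-- `(a,g,f)` is an almost-Riordan array: `a₀ = 1`, `g₀ = 1`, `f₀ = 0`, `f₁ = 1`. -/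
def isAR (t : PowerSeries ℤ × PowerSeries ℤ × PowerSeries ℤ) : Prop :=
  coeff 0 t.1 = 1 ∧ coeff 0 t.2.1 = 1 ∧ coeff 0 t.2.2 = 0 ∧ coeff 1 t.2.2 = 1

lemma coeff_pow_eq_zero_of_lt {f : PowerSeries ℤ} (hf : coeff 0 f = 0) {n k : ℕ} (h : n < k) :
    coeff n (f ^ k) = 0 :=
  coeff_of_lt_order n <| (Nat.cast_lt.mpr h).trans_le <|
    le_order_pow_of_constantCoeff_eq_zero k (by rwa [← coeff_zero_eq_constantCoeff_apply])

lemma hasSubst_of_coeff_zero {f : PowerSeries ℤ} (hf : coeff 0 f = 0) : HasSubst f :=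
  HasSubst.of_constantCoeff_zero' (by rwa [← coeff_zero_eq_constantCoeff_apply])

lemma comp_eq_subst {f : PowerSeries ℤ} (hf : coeff 0 f = 0) (h : PowerSeries ℤ) :
    comp h f = h.subst f := by
  ext n
  rw [coeff_subst' (hasSubst_of_coeff_zero hf),
    finsum_eq_sum_of_support_subset _ (s := range (n + 1))]
  · simp only [comp, coeff_mk, smul_eq_mul]
  · refine fun k hk => mem_coe.mpr (mem_range.mpr ?_)
    by_contra! hkn
    exact hk (by simp only [coeff_pow_eq_zero_of_lt hf hkn, smul_zero])

lemma comp_one {f : PowerSeries ℤ} (hf : coeff 0 f = 0) : comp 1 f = 1 := by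
  rw [comp_eq_subst hf, ← coe_substAlgHom (hasSubst_of_coeff_zero hf), map_one]

lemma comp_mul {f : PowerSeries ℤ} (hf : coeff 0 f = 0) (a b : PowerSeries ℤ) :
    comp (a * b) f = comp a f * comp b f := by
  simp only [comp_eq_subst hf, subst_mul (hasSubst_of_coeff_zero hf)]

lemma comp_X (g : PowerSeries ℤ) : comp g X = g := by
  rw [comp_eq_subst (coeff_zero_X (R := ℤ)), X_subst]

lemma coeff_zero_comp (h f : PowerSeries ℤ) : coeff 0 (comp h f) = coeff 0 h := by
  simp [comp]

lemma comp_comp {f h : PowerSeries ℤ} (hf : coeff 0 f = 0) (hh : coeff 0 h = 0)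
    (g : PowerSeries ℤ) : comp (comp g h) f = comp g (comp h f) := by
  have hhf : coeff 0 (comp h f) = 0 := by rw [coeff_zero_comp, hh]
  rw [comp_eq_subst hhf]
  simp only [comp_eq_subst hf, comp_eq_subst hh,
    subst_comp_subst_apply (hasSubst_of_coeff_zero hh) (hasSubst_of_coeff_zero hf)]

lemma mul_comp_eq_one_of_comp_mul_eq_one {g gi f fi : PowerSeries ℤ} (hf : coeff 0 f = 0)
    (hfi : coeff 0 fi = 0) (hfif : comp fi f = X) (hgi : comp g fi * gi = 1) :
    g * comp gi f = 1 := by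
  rw [← comp_one hf, ← hgi, comp_mul hf, comp_comp hf hfi, hfif, comp_X]

lemma act_one_right (a g f : PowerSeries ℤ) : act a g f 1 = a := by
  have hshift : shift 1 = 0 := by ext n; simp [shift, coeff_one]
  have hcomp : comp 0 f = 0 := by ext n; simp [comp]
  simp [act, hshift, hcomp]

theorem statement5_general (g f fi gi : PowerSeries ℤ)
    (hf0 : coeff 0 f = 0)
    (hfi0 : coeff 0 fi = 0)
    (hffi : comp f fi = X) (hfif : comp fi f = X)
    (hgi : comp g fi * gi = 1) :
    arMul (1, g, f) (1, gi, fi) = (1, 1, X) ∧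
    arMul (1, gi, fi) (1, g, f) = (1, 1, X) := by
  have hginv : g * comp gi f = 1 := mul_comp_eq_one_of_comp_mul_eq_one hf0 hfi0 hfif hgi
  refine ⟨?_, ?_⟩ <;> simp only [arMul, act_one_right, Prod.mk.injEq, true_and]
  · exact ⟨hginv, hfif⟩
  · exact ⟨by rwa [mul_comm], hffi⟩

/-- `(1,g,f)⁻¹ = (1, 1/(g∘f̄), f̄)`. Here `fi = f̄` is the compositional
inverse of `f` and `gi = 1/(g ∘ f̄)`. -/
theorem statement5 (g f fi gi : PowerSeries ℤ)
    (hg : coeff 0 g = 1) (hf0 : coeff 0 f = 0) (hf1 : coeff 1 f = 1)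
    (hfi0 : coeff 0 fi = 0)
    (hffi : comp f fi = X) (hfif : comp fi f = X)
    (hgi : comp g fi * gi = 1) :
    arMul (1, g, f) (1, gi, fi) = (1, 1, X) ∧
    arMul (1, gi, fi) (1, g, f) = (1, 1, X) :=
  statement5_general g f fi gi hf0 hfi0 hffi hfif hgi
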